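/- For every m ≥ 1 there exists a sequence of graphs H_1, …, H_m such that H_1 is the disjoint union of m copies of K_2, H_m is isomorphic to G_m, and for each 1 ≤ i ≤ m−1 there are distinct nonadjacent vertices x_i, y_i of H_i with H_{i+1} = Sub(H_i; x_i, y_i). Consequently, the independence complex of G_m is obtained from the independence complex of m disjoint edges (the boundary of the m-dimensional crosspolytope) by a sequence of m−1 edge subdivisions. -/

import Mathlib

/-- The vertex set of the graph `Gₘ`: `Sum.inl i` is the vertex `a_{i+1}` (for `0 ≤ i < m`),
`Sum.inr (Sum.inl i)` is `b_{i+1}`, and `Sum.inr (Sum.inr j)` is `c_{j+2}`. -/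
abbrev GV (m : ℕ) := Fin m ⊕ Fin m ⊕ Fin (m - 1)

/-- The vertex `a_{i+1}` of `Gₘ`. -/
def aV {m : ℕ} (i : Fin m) : GV m := Sum.inl i
/-- The vertex `b_{i+1}` of `Gₘ`. -/
def bV {m : ℕ} (i : Fin m) : GV m := Sum.inr (Sum.inl i)
/-- The vertex `c_{j+2}` of `Gₘ`. -/
def cV {m : ℕ} (j : Fin (m - 1)) : GV m := Sum.inr (Sum.inr j)

/-- Half of the adjacency relation of `Gₘ` (the full relation is its symmetrization):
the edges `a_i a_{i+1}`, `a_i b_i`, `b_i c_{i+1}`, `b_i c_i`, `c_i a_{i+1}` (1-based indices). -/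
def adjHalf (m : ℕ) : GV m → GV m → Bool
  | Sum.inl i, Sum.inl j => decide (i.val + 1 = j.val)
  | Sum.inl i, Sum.inr (Sum.inl j) => decide (i = j)
  | Sum.inl _, Sum.inr (Sum.inr _) => false
  | Sum.inr (Sum.inl _), Sum.inl _ => false
  | Sum.inr (Sum.inl _), Sum.inr (Sum.inl _) => false
  | Sum.inr (Sum.inl i), Sum.inr (Sum.inr j) => decide (i.val = j.val ∨ i.val = j.val + 1)
  | Sum.inr (Sum.inr j), Sum.inl i => decide (i.val = j.val + 2)
  | Sum.inr (Sum.inr _), Sum.inr (Sum.inl _) => false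
  | Sum.inr (Sum.inr _), Sum.inr (Sum.inr _) => false

/-- The graph `Gₘ` from the paper (with `3m - 1` vertices). -/
def Gm (m : ℕ) : SimpleGraph (GV m) where
  Adj u v := adjHalf m u v = true ∨ adjHalf m v u = true
  symm := ⟨fun _ _ h => h.symm⟩
  loopless := by
    refine ⟨?_⟩
    rintro (i | i | j) h <;> simp [adjHalf] at h

instance (m : ℕ) : DecidableRel (Gm m).Adj := fun u v =>
  inferInstanceAs (Decidable (adjHalf m u v = true ∨ adjHalf m v u = true))

/-- The graph `Sub(G; x, y)` obtained from `G` by adding the edge `xy` together with a new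
vertex `a = Sum.inr ()` joined to every neighbor of `x` or `y`. -/
def SubG {V : Type*} (G : SimpleGraph V) (x y : V) (hxy : x ≠ y) :
    SimpleGraph (V ⊕ Unit) where
  Adj u v :=
    match u, v with
    | Sum.inl u, Sum.inl v => G.Adj u v ∨ (u = x ∧ v = y) ∨ (u = y ∧ v = x)
    | Sum.inl u, Sum.inr _ => G.Adj u x ∨ G.Adj u y
    | Sum.inr _, Sum.inl v => G.Adj v x ∨ G.Adj v y
    | Sum.inr _, Sum.inr _ => False
  symm := by
    refine ⟨?_⟩
    rintro (u | u) (v | v) h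
    · rcases h with h | ⟨h1, h2⟩ | ⟨h1, h2⟩
      · exact Or.inl h.symm
      · exact Or.inr (Or.inr ⟨h2, h1⟩)
      · exact Or.inr (Or.inl ⟨h2, h1⟩)
    · exact h
    · exact h
    · exact h
  loopless := by
    refine ⟨?_⟩
    rintro (u | u) h
    · rcases h with h | ⟨h1, h2⟩ | ⟨h1, h2⟩
      · exact G.loopless.irrefl u h
      · exact hxy (h1.symm.trans h2)
      · exact hxy (h2.symm.trans h1)
    · exact h

/-- The disjoint union of `m` copies of `K₂`; its independence complex is the boundary of
the `m`-dimensional crosspolytope. -/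
def mK2 (m : ℕ) : SimpleGraph (Fin m × Fin 2) where
  Adj p q := p.1 = q.1 ∧ p.2 ≠ q.2
  symm := ⟨fun _ _ h => ⟨h.1.symm, h.2.symm⟩⟩
  loopless := ⟨fun _ h => h.2 rfl⟩


/-- Half of the adjacency of the intermediate graph after `i` subdivision steps. -/
def hamHalf (m i : ℕ) : (Fin m × Fin 2 ⊕ Fin i) → (Fin m × Fin 2 ⊕ Fin i) → Bool
  | Sum.inl p, Sum.inl q =>
      decide ((p.1 = q.1 ∧ p.2.val = 0 ∧ q.2.val = 1) ∨
        (p.2.val = 0 ∧ q.2.val = 0 ∧ q.1.val = p.1.val + 1 ∧ m ≤ p.1.val + 1 + i))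
  | Sum.inl p, Sum.inr t =>
      decide ((p.2.val = 1 ∧ (p.1.val + t.val + 2 = m ∨ p.1.val + t.val + 1 = m)) ∨
        (p.2.val = 0 ∧ p.1.val + t.val = m))
  | Sum.inr _, _ => false

/-- The intermediate graph after `i` subdivision steps. -/
def Ham (m i : ℕ) : SimpleGraph (Fin m × Fin 2 ⊕ Fin i) where
  Adj u v := hamHalf m i u v = true ∨ hamHalf m i v u = true
  symm := ⟨fun _ _ h => h.symm⟩
  loopless := by
    refine ⟨?_⟩
    rintro (⟨j, s⟩ | t) h <;> simp [hamHalf] at h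
    omega

/-- The initial graph is `m` disjoint copies of `K₂`. -/
def hamZeroIso (m : ℕ) : Ham m 0 ≃g mK2 m := by
  refine ⟨Equiv.sumEmpty (Fin m × Fin 2) (Fin 0), ?_⟩
  rintro (⟨j, s⟩ | t) (⟨k, t2⟩ | t2)
  · have hs := s.isLt; have ht := t2.isLt; have hj := j.isLt; have hk := k.isLt
    simp [mK2, Ham, hamHalf, Fin.ext_iff, -Fin.val_eq_zero_iff]
    omega
  · exact t2.elim0
  · exact t.elim0
  · exact t.elim0

/-- Splitting off the last element of `Fin (i+1)`. -/
def eStep (i : ℕ) {A : Type} : (A ⊕ Fin (i + 1)) ≃ ((A ⊕ Fin i) ⊕ Unit) where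
  toFun u := match u with
    | Sum.inl v => Sum.inl (Sum.inl v)
    | Sum.inr t => if h : t.val < i then Sum.inl (Sum.inr ⟨t.val, h⟩) else Sum.inr ()
  invFun u := match u with
    | Sum.inl (Sum.inl v) => Sum.inl v
    | Sum.inl (Sum.inr s) => Sum.inr s.castSucc
    | Sum.inr _ => Sum.inr (Fin.last i)
  left_inv := by
    rintro (v | t)
    · rfl
    · by_cases h : t.val < i <;> simp only [h, dif_pos, dif_neg, not_false_iff]
      · simp [Fin.ext_iff]
      · have ht := t.isLt
        simp only [Sum.inr.injEq, Fin.ext_iff, Fin.val_last]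
        omega
  right_inv := by
    rintro ((v | s) | u)
    · rfl
    · have hs := s.isLt
      simp [Fin.ext_iff]
    · simp

def stepX (m i : ℕ) (h : i + 2 ≤ m) : Fin m × Fin 2 ⊕ Fin i :=
  Sum.inl (⟨m - 2 - i, by omega⟩, 0)

def stepY (m i : ℕ) (h : i + 2 ≤ m) : Fin m × Fin 2 ⊕ Fin i :=
  Sum.inl (⟨m - 1 - i, by omega⟩, 0)

lemma step_ne (m i : ℕ) (h : i + 2 ≤ m) : stepX m i h ≠ stepY m i h := by
  simp [stepX, stepY, Fin.ext_iff]
  omega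

lemma step_not_adj (m i : ℕ) (h : i + 2 ≤ m) :
    ¬ (Ham m i).Adj (stepX m i h) (stepY m i h) := by
  simp [Ham, hamHalf, stepX, stepY, Fin.ext_iff, -Fin.val_eq_zero_iff]
  omega

def stepIso (m i : ℕ) (h : i + 2 ≤ m) :
    Ham m (i + 1) ≃g SubG (Ham m i) (stepX m i h) (stepY m i h) (step_ne m i h) := by
  refine ⟨eStep i, ?_⟩
  rintro (⟨j, s⟩ | t) (⟨k, t2⟩ | t2)
  · have hs := s.isLt; have ht := t2.isLt; have hj := j.isLt; have hk := k.isLt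
    simp [eStep, SubG, Ham, hamHalf, stepX, stepY, Prod.ext_iff, Fin.ext_iff, -Fin.val_eq_zero_iff]
    omega
  · have hs := s.isLt; have hj := j.isLt; have ht := t2.isLt
    by_cases hlt : t2.val < i <;>
      simp [eStep, hlt, SubG, Ham, hamHalf, stepX, stepY, Prod.ext_iff, Fin.ext_iff, -Fin.val_eq_zero_iff] <;>
      omega
  · have hs := t2.isLt; have hk := k.isLt; have ht := t.isLt
    by_cases hlt : t.val < i <;>
      simp [eStep, hlt, SubG, Ham, hamHalf, stepX, stepY, Prod.ext_iff, Fin.ext_iff, -Fin.val_eq_zero_iff] <;>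
      omega
  · have h1 := t.isLt; have h2 := t2.isLt
    by_cases hlt : t.val < i <;> by_cases hlt2 : t2.val < i <;>
      simp [eStep, hlt, hlt2, SubG, Ham, hamHalf, stepX, stepY, Fin.ext_iff, -Fin.val_eq_zero_iff] <;>
      omega

/-- The vertex identification for the final graph. -/
def eFin (m : ℕ) : (Fin m × Fin 2 ⊕ Fin (m - 1)) ≃ GV m where
  toFun u := match u with
    | Sum.inl (j, s) => if s.val = 0 then Sum.inl j else Sum.inr (Sum.inl j)
    | Sum.inr t => Sum.inr (Sum.inr t.rev)
  invFun u := match u with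
    | Sum.inl j => Sum.inl (j, 0)
    | Sum.inr (Sum.inl j) => Sum.inl (j, 1)
    | Sum.inr (Sum.inr t) => Sum.inr t.rev
  left_inv := by
    rintro (⟨j, s⟩ | t)
    · have hs := s.isLt
      by_cases h : s.val = 0 <;> simp [h, Prod.ext_iff, Fin.ext_iff] <;> omega
    · simp
  right_inv := by
    rintro (j | j | t) <;> simp

/-- The final graph is `Gₘ`. -/
def hamFinalIso (m : ℕ) : Ham m (m - 1) ≃g Gm m := by
  refine ⟨eFin m, ?_⟩
  rintro (⟨j, s⟩ | t) (⟨k, t2⟩ | t2)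
  · have hs := s.isLt; have ht := t2.isLt; have hj := j.isLt; have hk := k.isLt
    by_cases h1 : s.val = 0 <;> by_cases h2 : t2.val = 0 <;>
      simp [eFin, h1, h2, Gm, adjHalf, Ham, hamHalf, Fin.ext_iff, -Fin.val_eq_zero_iff] <;> omega
  · have hs := s.isLt; have hj := j.isLt; have ht := t2.isLt; have htm := t2.rev.isLt
    have hrev := Fin.val_rev t2
    by_cases h1 : s.val = 0 <;>
      simp [eFin, h1, Gm, adjHalf, Ham, hamHalf, Fin.ext_iff, -Fin.val_eq_zero_iff] <;> omega
  · have hs := t2.isLt; have hk := k.isLt; have ht := t.isLt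
    have hrev := Fin.val_rev t
    by_cases h1 : t2.val = 0 <;>
      simp [eFin, h1, Gm, adjHalf, Ham, hamHalf, Fin.ext_iff, -Fin.val_eq_zero_iff] <;> omega
  · have h1 := t.isLt; have h2 := t2.isLt
    have hr1 := Fin.val_rev t; have hr2 := Fin.val_rev t2
    simp [eFin, Gm, adjHalf, Ham, hamHalf, Fin.ext_iff, -Fin.val_eq_zero_iff]
/-- For every `m ≥ 1` there is a sequence of graphs `H 0, …, H (m-1)` such that `H 0` is the
disjoint union of `m` copies of `K₂`, `H (m-1)` is (isomorphic to) `Gₘ`, and each graph in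
the sequence is obtained from the previous one by the subdivision operation `Sub` at a pair
of distinct nonadjacent vertices; consequently the independence complex of `Gₘ` is obtained
from the boundary of the `m`-dimensional crosspolytope by `m − 1` edge subdivisions. -/
theorem Gm_from_crosspolytope_by_subdivisions (m : ℕ) (hm : 1 ≤ m) :
    ∃ (W : ℕ → Type) (H : ∀ i, SimpleGraph (W i)),
      Nonempty (H 0 ≃g mK2 m) ∧ Nonempty (H (m - 1) ≃g Gm m) ∧
      ∀ i < m - 1, ∃ (x y : W i) (hxy : x ≠ y),
        ¬ (H i).Adj x y ∧ Nonempty (H (i + 1) ≃g SubG (H i) x y hxy) := by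
  refine ⟨fun i => Fin m × Fin 2 ⊕ Fin (min i (m - 1)), fun i => Ham m (min i (m - 1)),
    ⟨?_⟩, ⟨?_⟩, ?_⟩
  · show Ham m (min 0 (m - 1)) ≃g mK2 m
    rw [Nat.zero_min]
    exact hamZeroIso m
  · show Ham m (min (m - 1) (m - 1)) ≃g Gm m
    rw [min_self]
    exact hamFinalIso m
  · intro i hi
    have h2 : i + 2 ≤ m := by omega
    have e1 : min i (m - 1) = i := by omega
    have e2 : min (i + 1) (m - 1) = i + 1 := by omega
    show ∃ (x y : Fin m × Fin 2 ⊕ Fin (min i (m - 1))) (hxy : x ≠ y),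
      ¬(Ham m (min i (m - 1))).Adj x y ∧
        Nonempty (Ham m (min (i + 1) (m - 1)) ≃g SubG (Ham m (min i (m - 1))) x y hxy)
    rw [e1, e2]
    exact ⟨stepX m i h2, stepY m i h2, step_ne m i h2, step_not_adj m i h2, ⟨stepIso m i h2⟩⟩
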